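/- arXiv:1610.09523 — 3 statements merged into one kernel-verified Lean document; each statement's English description precedes it below -/
import Mathlib

section
/- Let T be a triangulated category with suspension functor Σ, and let A be a preaisle of T, i.e. a nonempty full subcategory such that ΣX ∈ A for every X ∈ A, and Y ∈ A whenever X → Y → Z → ΣX is a distinguished triangle with X, Z ∈ A. Then the inclusion functor A ↪ T admits a right adjoint if and only if the pair (A, ΣA^⊥) is a t-structure on T. -/
/-!
STATEMENT 0: For a preaisle `A` in a triangulated category `T`, the inclusion
`A ↪ T` admits a right adjoint if and only if `(A, Σ A^⊥)` is a t-structure on `T`.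
-/

open CategoryTheory CategoryTheory.Limits CategoryTheory.Pretriangulated

universe v u

variable {T : Type u} [Category.{v} T] [HasZeroObject T] [HasShift T ℤ]
  [Preadditive T] [∀ n : ℤ, (shiftFunctor T n).Additive] [Pretriangulated T]

/-- A preaisle: a nonempty full subcategory closed under suspension and under
extensions (in a triangle `X ⟶ Y ⟶ Z ⟶ ΣX`, if `X, Z` belong then so does `Y`). -/
structure IsPreaisle (A : Set T) : Prop where
  nonempty : A.Nonempty
  shift_mem : ∀ {X : T}, X ∈ A → X⟦(1 : ℤ)⟧ ∈ A
  ext_mem : ∀ Tr : Triangle T, (Tr ∈ distTriang T) →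
    Tr.obj₁ ∈ A → Tr.obj₃ ∈ A → Tr.obj₂ ∈ A

/-- The right orthogonal `A^⊥ = {X : Hom(A', X) = 0 for all A' ∈ A}`. -/
def rightPerp (A : Set T) : Set T :=
  {X : T | ∀ A' ∈ A, ∀ f : A' ⟶ X, f = 0}

/-- The `n`-fold suspension `Σⁿ A` of a full subcategory `A`. -/
def shiftSet (n : ℤ) (A : Set T) : Set T :=
  {X : T | ∃ B ∈ A, Nonempty (X ≅ B⟦n⟧)}

/-- A t-structure `(A, A')`:
(1) `ΣA ⊆ A` and `A' ⊆ ΣA'`;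
(2) `Hom(A, B) = 0` for `A ∈ A`, `B ∈ Σ⁻¹A'`;
(3) every `X` fits in a distinguished triangle `A ⟶ X ⟶ B ⟶ ΣA` with
`A ∈ A`, `B ∈ Σ⁻¹A'`. -/
structure IsTStructure (A A' : Set T) : Prop where
  shift_subset : shiftSet (1 : ℤ) A ⊆ A
  subset_shift : A' ⊆ shiftSet (1 : ℤ) A'
  hom_zero : ∀ X ∈ A, ∀ B ∈ shiftSet (-1 : ℤ) A', ∀ f : X ⟶ B, f = 0
  exists_triangle : ∀ X : T, ∃ (Y Z : T) (i : Y ⟶ X) (q : X ⟶ Z) (w : Z ⟶ Y⟦(1 : ℤ)⟧),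
    (Triangle.mk i q w ∈ distTriang T) ∧ Y ∈ A ∧ Z ∈ shiftSet (-1 : ℤ) A'

/-!
The inclusion `A ↪ T` has a right adjoint exactly when every `X` has a coreflection `i : Y ⟶ X`,
i.e. `Y ∈ A` and `Hom(B, Y) → Hom(B, X)` is bijective for all `B ∈ A`. Complete `i` to a triangle
`Y ⟶ X ⟶ Z ⟶ ΣY`. If `i` is a coreflection and `f : B ⟶ Z` with `B ∈ A`, extension-closure puts
the middle term `E` of the triangle `Y ⟶ E ⟶ B ⟶ ΣY` built on `f ≫ w` in `A`; the induced map
`E ⟶ X` factors through `i`, which splits `Y ⟶ E`, so `f ≫ w = 0`. Then `f` lifts to `X`, hence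
through `i`, and vanishes: `Z ∈ A^⊥`. Conversely, if `Z ∈ A^⊥` then also `Σ⁻¹Z ∈ A^⊥` because
`ΣA ⊆ A`, and the long exact `Hom(B, -)` sequence makes `i` a coreflection. The remaining
t-structure axioms are formal once one knows `Σ⁻¹(ΣA^⊥) = A^⊥`.
-/

open ZeroObject

namespace CategoryTheory.ObjectProperty

variable {C : Type*} [Category C] (P : ObjectProperty C)

structure IsCoreflection {Y X : C} (i : Y ⟶ X) : Prop where
  mem : P Y
  bijective_comp : ∀ B, P B → Function.Bijective (fun g : B ⟶ Y => g ≫ i)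

lemma rightAdjointObjIsDefined_ι_iff (X : C) :
    P.ι.rightAdjointObjIsDefined X ↔ ∃ (Y : C) (i : Y ⟶ X), P.IsCoreflection i := by
  rw [Functor.rightAdjointObjIsDefined_iff]
  constructor
  · rintro ⟨Y, ⟨e⟩⟩
    refine ⟨Y.obj, e.homEquiv (𝟙 Y), Y.property, fun B hB => ?_⟩
    have hcomp (g : B ⟶ Y.obj) : g ≫ e.homEquiv (𝟙 Y) = e.homEquiv (homMk (X := ⟨B, hB⟩) g) := by
      simpa using (e.homEquiv_comp (homMk (X := ⟨B, hB⟩) g) (𝟙 Y)).symm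
    simp only [hcomp]
    exact e.homEquiv.bijective.comp
      (P.fullyFaithfulι.homEquiv (X := ⟨B, hB⟩) (Y := Y)).symm.bijective
  · rintro ⟨Y, i, hi⟩
    exact ⟨⟨Y, hi.mem⟩, ⟨{
      homEquiv := P.fullyFaithfulι.homEquiv.trans
        (Equiv.ofBijective _ (hi.bijective_comp _ (prop_ι_obj _ _)))
      homEquiv_comp := fun _ _ => Category.assoc _ _ _ }⟩⟩

lemma isLeftAdjoint_ι_iff :
    P.ι.IsLeftAdjoint ↔ ∀ X : C, ∃ (Y : C) (i : Y ⟶ X), P.IsCoreflection i := by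
  rw [Functor.isLeftAdjoint_iff_rightAdjointObjIsDefined_eq_top, eq_top_iff]
  exact forall_congr' fun X => true_imp_iff.trans (rightAdjointObjIsDefined_ι_iff P X)

end CategoryTheory.ObjectProperty

section Shift

variable {C : Type*} [Category C] [HasShift C ℤ]

lemma shiftSet_mono (n : ℤ) {S S' : Set C} (h : S ⊆ S') : shiftSet n S ⊆ shiftSet n S' :=
  fun _ ⟨B, hB, e⟩ => ⟨B, h hB, e⟩

lemma subset_shiftSet (n : ℤ) {S : Set C} (hS : ∀ X ∈ S, X⟦-n⟧ ∈ S) : S ⊆ shiftSet n S :=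
  fun X hX => ⟨X⟦-n⟧, hS X hX, ⟨((shiftFunctorCompIsoId C (-n) n (neg_add_cancel n)).app X).symm⟩⟩

lemma shiftSet_neg_shiftSet (n : ℤ) {S : Set C} (hS : ∀ {X X' : C}, (X ≅ X') → X ∈ S → X' ∈ S) :
    shiftSet (-n) (shiftSet n S) = S := by
  ext X
  constructor
  · rintro ⟨Y, ⟨D, hD, ⟨e⟩⟩, ⟨e'⟩⟩
    exact hS (((shiftFunctorCompIsoId C n (-n) (add_neg_cancel n)).app D).symm ≪≫
      (shiftFunctor C (-n)).mapIso e.symm ≪≫ e'.symm) hD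
  · intro hX
    exact ⟨X⟦n⟧, ⟨X, hX, ⟨Iso.refl _⟩⟩,
      ⟨((shiftFunctorCompIsoId C n (-n) (add_neg_cancel n)).app X).symm⟩⟩

end Shift

section RightPerp

variable {C : Type*} [Category C] [Preadditive C] {A : Set C}

lemma mem_rightPerp_of_iso {X X' : C} (e : X ≅ X') (hX : X ∈ rightPerp A) : X' ∈ rightPerp A :=
  fun B hB f => (cancel_mono e.inv).1 (by simp [hX B hB (f ≫ e.inv)])

variable [HasShift C ℤ] [(shiftFunctor C (1 : ℤ)).Additive]

lemma shift_neg_one_mem_rightPerp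
    (hA : ∀ {X : C}, X ∈ A → X⟦(1 : ℤ)⟧ ∈ A) {D : C} (hD : D ∈ rightPerp A) :
    D⟦(-1 : ℤ)⟧ ∈ rightPerp A := by
  intro B hB f
  have h : f⟦(1 : ℤ)⟧' ≫ (shiftEquiv C (1 : ℤ)).counitIso.hom.app D = 0 := hD _ (hA hB) _
  apply (shiftFunctor C (1 : ℤ)).map_injective
  rw [Functor.map_zero]
  exact (cancel_mono ((shiftEquiv C (1 : ℤ)).counitIso.hom.app D)).mp (h.trans zero_comp.symm)

end RightPerp

section Triangulated

variable {C : Type*} [Category C] [HasZeroObject C] [HasShift C ℤ] [Preadditive C]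
  [∀ n : ℤ, (shiftFunctor C n).Additive] [Pretriangulated C]

lemma bijective_comp_of_distTriang {Y X Z B : C} {i : Y ⟶ X} {q : X ⟶ Z} {w : Z ⟶ Y⟦(1 : ℤ)⟧}
    (hT : Triangle.mk i q w ∈ distTriang C) (hZ : ∀ f : B ⟶ Z, f = 0)
    (hZ' : ∀ f : B ⟶ Z⟦(-1 : ℤ)⟧, f = 0) : Function.Bijective (fun g : B ⟶ Y => g ≫ i) := by
  refine ⟨fun g₁ g₂ h => ?_, fun f => ?_⟩
  · have hsub : (g₁ - g₂) ≫ i = 0 := by rw [Preadditive.sub_comp, sub_eq_zero]; exact h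
    obtain ⟨k, hk⟩ := Triangle.coyoneda_exact₂ _ (inv_rot_of_distTriang _ hT) (g₁ - g₂) hsub
    exact sub_eq_zero.mp (hk.trans ((congrArg (· ≫ _) (hZ' k)).trans zero_comp))
  · obtain ⟨g, hg⟩ := Triangle.coyoneda_exact₂ _ hT f (hZ _)
    exact ⟨g, hg.symm⟩

variable {A : Set C}

lemma IsPreaisle.zero_mem (hA : IsPreaisle A) : (0 : C) ∈ A := by
  obtain ⟨W, hW⟩ := hA.nonempty
  exact hA.ext_mem _ (rot_of_distTriang _ (contractible_distinguished W)) hW (hA.shift_mem hW)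

lemma IsPreaisle.mem_of_iso (hA : IsPreaisle A) {X X' : C} (e : X ≅ X') (hX : X ∈ A) : X' ∈ A := by
  have hT : Triangle.mk e.hom 0 (0 : (0 : C) ⟶ X⟦(1 : ℤ)⟧) ∈ distTriang C :=
    isomorphic_distinguished _ (contractible_distinguished X) _
      (Triangle.isoMk _ _ (Iso.refl X) e.symm (Iso.refl 0)
        (e.hom_inv_id.trans (Category.comp_id _).symm) (zero_comp.trans comp_zero.symm)
        (zero_comp.trans comp_zero.symm))
  exact hA.ext_mem _ hT hX hA.zero_mem

lemma isTStructure_iff_forall_exists_triangle (hA : IsPreaisle A) :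
    IsTStructure A (shiftSet (1 : ℤ) (rightPerp A)) ↔
      ∀ X : C, ∃ (Y Z : C) (i : Y ⟶ X) (q : X ⟶ Z) (w : Z ⟶ Y⟦(1 : ℤ)⟧),
        Triangle.mk i q w ∈ distTriang C ∧ Y ∈ A ∧ Z ∈ rightPerp A := by
  have hperp : shiftSet (-1) (shiftSet 1 (rightPerp A)) = rightPerp A :=
    shiftSet_neg_shiftSet 1 mem_rightPerp_of_iso
  refine ⟨fun h => by simpa only [hperp] using h.exists_triangle,
    fun h => ⟨?_, ?_, ?_, by simpa only [hperp] using h⟩⟩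
  · rintro X ⟨B, hB, ⟨e⟩⟩
    exact hA.mem_of_iso e.symm (hA.shift_mem hB)
  · exact shiftSet_mono 1
      (subset_shiftSet 1 fun D hD => shift_neg_one_mem_rightPerp hA.shift_mem hD)
  · rw [hperp]
    exact fun X hX B hB f => hB X hX f

variable {Y X Z : C} {i : Y ⟶ X} {q : X ⟶ Z} {w : Z ⟶ Y⟦(1 : ℤ)⟧}

lemma comp_mor₃_eq_zero_of_isCoreflection (hA : IsPreaisle A)
    (hi : ObjectProperty.IsCoreflection (· ∈ A) i) (hT : Triangle.mk i q w ∈ distTriang C)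
    {B : C} (hB : B ∈ A) (f : B ⟶ Z) : f ≫ w = 0 := by
  obtain ⟨E, δ, p, hT'⟩ := distinguished_cocone_triangle₂ (f ≫ w)
  have hcomm : (f ≫ w) ≫ (𝟙 Y)⟦(1 : ℤ)⟧' = f ≫ w := by
    rw [CategoryTheory.Functor.map_id, Category.comp_id]
  obtain ⟨m, hm, -⟩ : ∃ m : E ⟶ X, δ ≫ m = 𝟙 Y ≫ i ∧ p ≫ f = m ≫ q :=
    complete_distinguished_triangle_morphism₂ _ _ hT' hT (𝟙 Y) f hcomm
  obtain ⟨g, hg⟩ := (hi.bijective_comp E (hA.ext_mem _ hT' hi.mem hB)).2 m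
  have hgi : g ≫ i = m := hg
  have hδg : δ ≫ g = 𝟙 Y := (hi.bijective_comp Y hi.mem).1
    (show (δ ≫ g) ≫ i = 𝟙 Y ≫ i by rw [Category.assoc, hgi, hm])
  have : Mono δ := (IsSplitMono.mk' ⟨g, hδg⟩).mono
  exact Triangle.mor₃_eq_zero_of_mono₁ _ hT' this

lemma mem_rightPerp_of_isCoreflection (hA : IsPreaisle A)
    (hi : ObjectProperty.IsCoreflection (· ∈ A) i) (hT : Triangle.mk i q w ∈ distTriang C) :
    Z ∈ rightPerp A := by
  intro B hB f
  obtain ⟨g, hg⟩ :=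
    Triangle.coyoneda_exact₃ _ hT f (comp_mor₃_eq_zero_of_isCoreflection hA hi hT hB f)
  obtain ⟨k, rfl⟩ := (hi.bijective_comp B hB).2 g
  have hiq : i ≫ q = 0 := comp_distTriang_mor_zero₁₂ _ hT
  have hf : f = k ≫ i ≫ q := hg.trans (Category.assoc _ _ _)
  rw [hf, hiq, comp_zero]

end Triangulated

/-- Keller–Vossieck: a preaisle `A` is an aisle (the inclusion `A ↪ T` has a
right adjoint) if and only if `(A, Σ A^⊥)` is a t-structure on `T`. -/
theorem preaisle_isLeftAdjoint_iff_tStructure (A : Set T) (hA : IsPreaisle A) :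
    (ObjectProperty.ι (fun X => X ∈ A)).IsLeftAdjoint ↔
      IsTStructure A (shiftSet (1 : ℤ) (rightPerp A)) := by
  rw [ObjectProperty.isLeftAdjoint_ι_iff, isTStructure_iff_forall_exists_triangle hA]
  refine forall_congr' fun X => ⟨?_, ?_⟩
  · rintro ⟨Y, i, hi⟩
    obtain ⟨Z, q, w, hT⟩ := distinguished_cocone_triangle i
    exact ⟨Y, Z, i, q, w, hT, hi.mem, mem_rightPerp_of_isCoreflection hA hi hT⟩
  · rintro ⟨Y, Z, i, q, w, hT, hY, hZ⟩
    exact ⟨Y, i, hY, fun B hB => bijective_comp_of_distTriang hT (hZ B hB)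
      (shift_neg_one_mem_rightPerp hA.shift_mem hZ B hB)⟩
end

section
/- Let X ∈ D^c_fg(R), let n ∈ ℤ, and let (Y_α)_{α ∈ I} be any family of R-modules. Then the canonical map ⊕_{α ∈ I} Hom_{D(R)}(X, Σ^n Y_α) → Hom_{D(R)}(X, Σ^n ⊕_{α ∈ I} Y_α) is an isomorphism. -/
open CategoryTheory CategoryTheory.Limits CategoryTheory.Pretriangulated

universe w u

variable (R : Type u) [CommRing R] [IsNoetherianRing R]
  [HasDerivedCategory.{w} (ModuleCat.{u} R)]

/-- The derived category `D(R)` of the commutative Noetherian ring `R`. -/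
abbrev DCat := DerivedCategory (ModuleCat.{u} R)

/-- The homological `i`-th homology functor `H_i` on `D(R)` (with the cochain
conventions of Mathlib, `H_i = H^{-i}`). -/
noncomputable abbrev Hgy (i : ℤ) : DCat R ⥤ ModuleCat.{u} R :=
  DerivedCategory.homologyFunctor _ (-i)

/-- A cocomplete preaisle of `D(R)`: a full (isomorphism-closed) subcategory closed
under suspension, extensions and arbitrary coproducts. -/
structure IsCocompletePreaisle (A : Set (DCat R)) : Prop where
  mem_of_iso : ∀ {X Y : DCat R}, (X ≅ Y) → X ∈ A → Y ∈ A
  shift_mem : ∀ {X : DCat R}, X ∈ A → X⟦(1 : ℤ)⟧ ∈ A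
  ext_mem : ∀ T : Triangle (DCat R), (T ∈ distTriang (DCat R)) →
    T.obj₁ ∈ A → T.obj₃ ∈ A → T.obj₂ ∈ A
  coproduct_mem : ∀ {ι : Type u} (f : ι → DCat R) (c : Cofan f),
    IsColimit c → (∀ i, f i ∈ A) → c.pt ∈ A

/-- `C̄(E)`, the smallest cocomplete preaisle of `D(R)` containing `E`. -/
def nullClass (E : DCat R) : Set (DCat R) :=
  ⋂₀ {A | IsCocompletePreaisle R A ∧ E ∈ A}

/-- An `R`-module regarded as an object of `D(R)` concentrated in degree `0`. -/
noncomputable abbrev sMod (N : ModuleCat.{u} R) : DCat R :=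
  (DerivedCategory.singleFunctor (ModuleCat.{u} R) 0).obj N

/-- A cochain complex is `K`-projective if every chain map from it to an acyclic
complex is null-homotopic. -/
def IsKProjective (P : CochainComplex (ModuleCat.{u} R) ℤ) : Prop :=
  ∀ Y : CochainComplex (ModuleCat.{u} R) ℤ, (∀ n : ℤ, IsZero (Y.homology n)) →
    ∀ f : P ⟶ Y, Nonempty (Homotopy f 0)

/-- Membership in `D^c_fg(R)`: the objects of `D(R)` isomorphic to a `K`-projective
complex which is degreewise finitely generated and projective. -/
def InDcfg (M : DCat R) : Prop :=
  ∃ P : CochainComplex (ModuleCat.{u} R) ℤ, IsKProjective R P ∧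
    (∀ n : ℤ, Module.Finite R (P.X n)) ∧ (∀ n : ℤ, Module.Projective R (P.X n)) ∧
    Nonempty (DerivedCategory.Q.obj P ≅ M)

open DirectSum

/-!
Injectivity is formal: composing with the image of the projection `∐ Y ⟶ Y β` recovers the
`β`-component, for any additive functor. For surjectivity it suffices that every
`g : X ⟶ Σⁿ ∐ Y` is fixed by the idempotent `∑_{α ∈ S} π_α ≫ ι_α` for some finite `S`.
Writing `X ≅ Q P` with `P` K-projective, `g` lifts to a chain map from `P` to the complex with
`∐ Y` in degree `-n`; such a chain map is its component `P^{-n} ⟶ ∐ Y`, whose image is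
finitely generated and hence lies in finitely many summands.
-/

namespace CategoryTheory.Limits

namespace Sigma

variable {C : Type*} [Category C] [Preadditive C] {I : Type*} [DecidableEq I]
  (Y : I → C) [HasCoproduct Y]

noncomputable def projOn (S : Finset I) : ∐ Y ⟶ ∐ Y :=
  ∑ α ∈ S, Sigma.π Y α ≫ Sigma.ι Y α

lemma ι_projOn_of_mem {S : Finset I} {α : I} (hα : α ∈ S) :
    Sigma.ι Y α ≫ projOn Y S = Sigma.ι Y α := by
  rw [projOn, Preadditive.comp_sum, Finset.sum_eq_single_of_mem α hα
    fun β _ hβ => by rw [Sigma.ι_π_of_ne_assoc Y hβ.symm, zero_comp], Sigma.ι_π_eq_id_assoc]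

end Sigma

section SigmaHomComparison

variable {C D : Type*} [Category C] [Category D] [Preadditive C] [Preadditive D]
  (F : C ⥤ D) [F.Additive] {I : Type*} [DecidableEq I] (Y : I → C) [HasCoproduct Y] (A : D)

noncomputable def sigmaHomComparison : (⨁ α, (A ⟶ F.obj (Y α))) →+ (A ⟶ F.obj (∐ Y)) :=
  toAddMonoid fun α => AddMonoidHom.mk' (· ≫ F.map (Sigma.ι Y α)) fun _ _ => Preadditive.add_comp ..

variable {F Y A}

lemma sigmaHomComparison_comp_map_π (x : ⨁ α, (A ⟶ F.obj (Y α))) (β : I) :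
    sigmaHomComparison F Y A x ≫ F.map (Sigma.π Y β) = x β := by
  induction x using DirectSum.induction_on with
  | zero => simp
  | of α f =>
    rw [sigmaHomComparison, toAddMonoid_of]
    by_cases h : α = β
    · subst h
      simp [← F.map_comp]
    · simp [← F.map_comp, Sigma.ι_π_of_ne Y h, of_eq_of_ne _ _ _ (Ne.symm h)]
  | add x y hx hy => rw [map_add, Preadditive.add_comp, hx, hy, DirectSum.add_apply]

variable (F Y A)

lemma sigmaHomComparison_injective : Function.Injective (sigmaHomComparison F Y A) :=
  fun x y h => DFinsupp.ext fun β => by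
    rw [← sigmaHomComparison_comp_map_π, h, sigmaHomComparison_comp_map_π]

lemma sigmaHomComparison_surjective
    (h : ∀ g : A ⟶ F.obj (∐ Y), ∃ S : Finset I, g ≫ F.map (Sigma.projOn Y S) = g) :
    Function.Surjective (sigmaHomComparison F Y A) := by
  intro g
  obtain ⟨S, hS⟩ := h g
  refine ⟨∑ α ∈ S, of _ α (g ≫ F.map (Sigma.π Y α)), ?_⟩
  rw [map_sum]
  conv_rhs => rw [← hS, Sigma.projOn, F.map_sum, Preadditive.comp_sum]
  refine Finset.sum_congr rfl fun α _ => ?_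
  rw [sigmaHomComparison, toAddMonoid_of, AddMonoidHom.mk'_apply, F.map_comp, Category.assoc]

end SigmaHomComparison

end CategoryTheory.Limits

universe v

section ModuleCoproduct

variable {A : Type u} [Ring A] {I : Type v} [DecidableEq I] (Y : I → ModuleCat.{v} A)

open Filter

lemma ModuleCat.eventually_projOn_apply_eq (z : ↑(∐ Y)) :
    ∀ᶠ S in atTop, Sigma.projOn Y S z = z := by
  let N : Submodule A ↑(∐ Y) :=
    { carrier := {z | ∀ᶠ S in atTop, Sigma.projOn Y S z = z}
      add_mem' := fun hz hz' => by
        filter_upwards [hz, hz'] with S h h'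
        rw [map_add, h, h']
      zero_mem' := .of_forall fun _ => map_zero _
      smul_mem' := fun c _ hz => by
        filter_upwards [hz] with S h
        rw [map_smul, h] }
  have hι : ∀ α (y : Y α), Sigma.ι Y α y ∈ N := fun α y =>
    (eventually_ge_atTop {α}).mono fun S hS => by
      rw [← ConcreteCategory.comp_apply, Sigma.ι_projOn_of_mem Y (hS (Finset.mem_singleton_self α))]
  -- `N` contains the image of every `ι`, so the projection onto `(∐ Y) ⧸ N` vanishes.
  have hq : ModuleCat.ofHom N.mkQ = 0 := Sigma.hom_ext _ _ fun α => by
    ext y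
    simpa using hι α y
  exact (by simpa using congr(($hq).hom z) : z ∈ N)

lemma ModuleCat.exists_comp_projOn_eq {M : ModuleCat.{v} A} [Module.Finite A M] (φ : M ⟶ ∐ Y) :
    ∃ S : Finset I, φ ≫ Sigma.projOn Y S = φ := by
  obtain ⟨s, hs⟩ := Module.Finite.fg_top (R := A) (M := M)
  obtain ⟨S, hS⟩ := (s.eventually_all.2 fun m _ => eventually_projOn_apply_eq Y (φ m)).exists
  exact ⟨S, hom_ext (LinearMap.ext_on hs hS)⟩

lemma HomologicalComplex.exists_comp_single_map_projOn_eq {ι : Type*} [DecidableEq ι]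
    {c : ComplexShape ι} {K : HomologicalComplex (ModuleCat.{v} A) c} (j : ι)
    [Module.Finite A (K.X j)] (f : K ⟶ (single _ c j).obj (∐ Y)) :
    ∃ S : Finset I, f ≫ (single _ c j).map (Sigma.projOn Y S) = f := by
  obtain ⟨S, hS⟩ := ModuleCat.exists_comp_projOn_eq Y (f.f j ≫ (singleObjXSelf c j _).hom)
  refine ⟨S, to_single_hom_ext ?_⟩
  rw [comp_f, single_map_f_self, ← Category.assoc, ← Category.assoc, hS, Category.assoc,
    Iso.hom_inv_id, Category.comp_id]

open DerivedCategory in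
lemma CochainComplex.IsKProjective.Q_map_surjective {C : Type*} [Category C] [Abelian C]
    [HasDerivedCategory.{w} C] (K L : CochainComplex C ℤ) [K.IsKProjective] :
    Function.Surjective (Q.map : (K ⟶ L) → (Q.obj K ⟶ Q.obj L)) := by
  intro φ
  obtain ⟨g, hg⟩ := (Qh_map_bijective K ((HomotopyCategory.quotient _ _).obj L)).surjective
    ((quotientCompQhIso C).hom.app K ≫ φ ≫ (quotientCompQhIso C).inv.app L)
  obtain ⟨f, rfl⟩ := (HomotopyCategory.quotient _ _).map_surjective g
  refine ⟨f, ?_⟩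
  rw [← cancel_epi ((quotientCompQhIso C).hom.app K), ← quotientCompQhIso_hom_naturality, hg]
  simp

lemma DerivedCategory.exists_comp_shift_singleFunctor_map_projOn_eq
    [HasDerivedCategory.{w} (ModuleCat.{v} A)] {P : CochainComplex (ModuleCat.{v} A) ℤ}
    [P.IsKProjective] (n : ℤ) [Module.Finite A (P.X (-n))] {X : DerivedCategory (ModuleCat.{v} A)}
    (ψ : Q.obj P ≅ X) (g : X ⟶ ((singleFunctor _ 0).obj (∐ Y))⟦n⟧) :
    ∃ S : Finset I, g ≫ ((singleFunctor _ 0).map (Sigma.projOn Y S))⟦n⟧' = g := by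
  let E : singleFunctor (ModuleCat.{v} A) 0 ⋙ shiftFunctor _ n ≅
      HomologicalComplex.single _ (ComplexShape.up ℤ) (-n) ⋙ Q :=
    (singleFunctors _).shiftIso n (-n) 0 (add_neg_cancel n) ≪≫ singleFunctorIsoCompQ _ (-n)
  obtain ⟨f, hf⟩ := CochainComplex.IsKProjective.Q_map_surjective P _ (ψ.hom ≫ g ≫ E.hom.app (∐ Y))
  obtain ⟨S, hS⟩ := HomologicalComplex.exists_comp_single_map_projOn_eq Y (-n) f
  refine ⟨S, ?_⟩
  rw [← cancel_mono (E.hom.app _), ← cancel_epi ψ.hom]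
  calc ψ.hom ≫ (g ≫ ((singleFunctor _ 0).map (Sigma.projOn Y S))⟦n⟧') ≫ E.hom.app (∐ Y)
      _ = Q.map f ≫ Q.map ((HomologicalComplex.single _ _ (-n)).map (Sigma.projOn Y S)) := by
        rw [hf]
        simp only [Category.assoc]
        exact congrArg (ψ.hom ≫ g ≫ ·) (E.hom.naturality (Sigma.projOn Y S))
      _ = ψ.hom ≫ g ≫ E.hom.app (∐ Y) := by rw [← Q.map_comp, hS, hf]

end ModuleCoproduct

/-- For `X ∈ D^c_fg(R)` the canonical map
`⊕_α Hom(X, Σⁿ Y_α) ⟶ Hom(X, Σⁿ ⊕_α Y_α)` is bijective. -/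
theorem hom_commutes_with_coproducts (X : DCat R) (hX : InDcfg R X) (n : ℤ)
    {I : Type u} [DecidableEq I] (Y : I → ModuleCat.{u} R) :
    Function.Bijective
      (DirectSum.toAddMonoid
        (fun α : I =>
          AddMonoidHom.mk'
            (fun f : X ⟶ (sMod R (Y α))⟦n⟧ =>
              f ≫ ((DerivedCategory.singleFunctor (ModuleCat.{u} R) 0).map
                (Sigma.ι Y α))⟦n⟧')
            (fun f g => by simp [Preadditive.add_comp])) :
        (⨁ α : I, (X ⟶ (sMod R (Y α))⟦n⟧)) →+ (X ⟶ (sMod R (∐ Y))⟦n⟧)) := by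
  obtain ⟨P, hP, hfin, -, ⟨ψ⟩⟩ := hX
  have : P.IsKProjective := ⟨fun f hL => hP _ (fun i => (hL i).isZero_homology) f⟩
  have := hfin (-n)
  let F := DerivedCategory.singleFunctor (ModuleCat.{u} R) 0 ⋙ shiftFunctor (DCat R) n
  exact ⟨sigmaHomComparison_injective F Y X, sigmaHomComparison_surjective F Y X
    (DerivedCategory.exists_comp_shift_singleFunctor_map_projOn_eq Y n ψ)⟩
end

section
/- Let M ∈ D_fg(R) with H_n(M) ≠ 0 for some n ∈ ℤ. Then there exists a prime ideal p ∈ Supp H_n(M) such that, writing p = (x_1, …, x_k) and M(0) = M, M(i) = Cone(x_i : M(i−1) → M(i−1)), one has H_n(M(k)) ⊗_R R_p ≠ 0; that is, p ∈ Supp H_n(M ⊗ K(p)). -/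
open CategoryTheory CategoryTheory.Limits

universe u

variable (R : Type u) [CommRing R] [IsNoetherianRing R]

/-- Iterated mapping cones of multiplication maps: `iterCone [] M = M` and
`iterCone (x :: l) M = Cone(x : iterCone l M ⟶ iterCone l M)`. -/
noncomputable def iterCone : List R → CochainComplex (ModuleCat.{u} R) ℤ →
    CochainComplex (ModuleCat.{u} R) ℤ
  | [], M => M
  | x :: l, M => CochainComplex.mappingCone ((x • 𝟙 (iterCone l M) : _))

/-- The Koszul complex `K(x₁, …, x_k)` on a list of elements of `R`, defined
inductively by `K(0) = R` and `K(i) = Cone(xᵢ : K(i−1) ⟶ K(i−1))`. -/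
noncomputable def koszul (l : List R) : CochainComplex (ModuleCat.{u} R) ℤ :=
  iterCone R l
    ((HomologicalComplex.single (ModuleCat.{u} R) (ComplexShape.up ℤ) 0).obj
      (ModuleCat.of R R))

/-!
Every prime `p` in the support of `H_n(M)` works. For `x ∈ p`, the mapping cone triangle of
`x : N ⟶ N` gives an exact sequence `H_n(N) --x--> H_n(N) → H_n(Cone x)`, so `H_n(Cone x)`
contains `H_n(N)/x H_n(N)`, whose support is `Supp H_n(N) ∩ V(x)` by Nakayama. As `R` is
Noetherian and `H_n(Cone x)` sits between `H_n(N)` and `H_{n-1}(N)` in the long exact sequence,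
it is again finitely generated, so the step can be iterated over the generators of `p`.
-/

open CochainComplex HomologicalComplex

lemma HomologicalComplex.homologyMap_smul {S : Type*} [Ring S] {C : Type*} [Category C]
    [Preadditive C] [Linear S C] [CategoryWithHomology C] {ι : Type*} {c : ComplexShape ι}
    {K L : HomologicalComplex C c} (φ : K ⟶ L) (x : S) (i : ι) :
    homologyMap (x • φ) i = x • homologyMap φ i := by
  have h : (shortComplexFunctor C c i).map (x • φ) = x • (shortComplexFunctor C c i).map φ := by
    ext <;> rfl
  rw [homologyMap, h, ShortComplex.homologyMap_smul]
  rfl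

variable {R}

section

omit [IsNoetherianRing R]

open scoped Pointwise in
lemma Module.support_inter_zeroLocus_subset_of_exact {A B : Type*} [AddCommGroup A] [Module R A]
    [AddCommGroup B] [Module R B] [Module.Finite R A] {x : R} {g : A →ₗ[R] B}
    (h : Function.Exact (x • LinearMap.id : A →ₗ[R] A) g) :
    Module.support R A ∩ PrimeSpectrum.zeroLocus {x} ⊆ Module.support R B := by
  have hker : x • ⊤ = LinearMap.ker g := by
    ext y
    simp [h.linearMap_ker_eq, Submodule.mem_smul_pointwise_iff_exists]
  rw [← Module.support_quotSMulTop]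
  exact Module.support_subset_of_injective _
    (LinearMap.ker_eq_bot.mp (Submodule.ker_liftQ_eq_bot' _ g hker))

namespace CochainComplex.mappingCone

variable {K L : CochainComplex (ModuleCat.{u} R) ℤ} (φ : K ⟶ L)

lemma exact_homologyMap_inr (n : ℤ) :
    Function.Exact (homologyMap φ n).hom (homologyMap (inr φ) n).hom :=
  let := HasDerivedCategory.standard (ModuleCat.{u} R)
  (ShortComplex.ShortExact.moduleCat_exact_iff_function_exact _).mp <|
    homologyMap_exact₂_of_distTriang _ (DerivedCategory.mappingCone_triangle_distinguished φ) n

lemma exact_homologyMap_inr_homologyδOfTriangle (n : ℤ) :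
    Function.Exact (homologyMap (inr φ) n).hom
      (homologyδOfTriangle (triangle φ) n (n + 1)).hom :=
  let := HasDerivedCategory.standard (ModuleCat.{u} R)
  (ShortComplex.ShortExact.moduleCat_exact_iff_function_exact _).mp <|
    homologyMap_exact₃_of_distTriang _
      (DerivedCategory.mappingCone_triangle_distinguished φ) n (n + 1)

end CochainComplex.mappingCone

lemma support_homology_inter_zeroLocus_subset_mappingCone
    (N : CochainComplex (ModuleCat.{u} R) ℤ) (x : R) (n : ℤ) [Module.Finite R (N.homology n)] :
    Module.support R (N.homology n) ∩ PrimeSpectrum.zeroLocus {x} ⊆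
      Module.support R ((mappingCone (x • 𝟙 N)).homology n) := by
  have h := mappingCone.exact_homologyMap_inr (x • 𝟙 N) n
  rw [homologyMap_smul, homologyMap_id] at h
  exact Module.support_inter_zeroLocus_subset_of_exact h

end

lemma Module.Finite.of_exact_of_isNoetherianRing {A B C : Type*} [AddCommGroup A] [Module R A]
    [AddCommGroup B] [Module R B] [AddCommGroup C] [Module R C] {f : A →ₗ[R] B}
    {g : B →ₗ[R] C} (h : Function.Exact f g) [Module.Finite R A] [Module.Finite R C] :
    Module.Finite R B :=
  have : IsNoetherian R B := isNoetherian_of_range_eq_ker f g h.linearMap_ker_eq.symm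
  inferInstance

lemma Module.Finite.mappingCone_homology {K L : CochainComplex (ModuleCat.{u} R) ℤ} (φ : K ⟶ L)
    (hK : ∀ i, Module.Finite R (K.homology i)) (hL : ∀ i, Module.Finite R (L.homology i))
    (n : ℤ) : Module.Finite R ((mappingCone φ).homology n) :=
  have : Module.Finite R ((mappingCone.triangle φ).obj₁.homology (n + 1)) := hK (n + 1)
  have := hL n
  .of_exact_of_isNoetherianRing (mappingCone.exact_homologyMap_inr_homologyδOfTriangle φ n)

lemma Module.Finite.iterCone_homology (l : List R) (M : CochainComplex (ModuleCat.{u} R) ℤ)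
    (hM : ∀ i, Module.Finite R (M.homology i)) (n : ℤ) :
    Module.Finite R ((iterCone R l M).homology n) := by
  induction l generalizing n with
  | nil => exact hM n
  | cons x l ih => exact .mappingCone_homology _ ih ih n

lemma support_homology_inter_zeroLocus_subset_iterCone (l : List R)
    (M : CochainComplex (ModuleCat.{u} R) ℤ) (hM : ∀ i, Module.Finite R (M.homology i)) (n : ℤ) :
    Module.support R (M.homology n) ∩ PrimeSpectrum.zeroLocus {x | x ∈ l} ⊆
      Module.support R ((iterCone R l M).homology n) := by
  induction l with
  | nil => exact Set.inter_subset_left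
  | cons x l ih =>
    rintro p ⟨hp, hl⟩
    rw [PrimeSpectrum.mem_zeroLocus, Set.ofPred_subset] at hl
    have := Module.Finite.iterCone_homology l M hM n
    refine support_homology_inter_zeroLocus_subset_mappingCone _ x n ⟨ih ⟨hp, ?_⟩, ?_⟩
    · exact fun y hy ↦ hl y (List.mem_cons_of_mem x hy)
    · simpa using hl x List.mem_cons_self

/-- If `M` has finitely generated homology and `H_n(M) ≠ 0`, then there is a prime
`p ∈ Supp H_n(M)` such that, writing `p = (x₁, …, x_k)` and
`M(i) = Cone(xᵢ : M(i−1) ⟶ M(i−1))`, one has `H_n(M(k))_p ≠ 0`; that is,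
`p ∈ Supp H_n(M ⊗ K(p))`. (With the cochain conventions used here, `H_n = H^{-n}`.) -/
theorem exists_prime_support_iterCone
    (M : CochainComplex (ModuleCat.{u} R) ℤ)
    (hfg : ∀ i : ℤ, Module.Finite R (M.homology i))
    (n : ℤ) (hn : ¬ IsZero (M.homology (-n))) :
    ∃ p ∈ Module.support R (M.homology (-n)),
      ∀ (k : ℕ) (x : Fin k → R), Ideal.span (Set.range x) = p.asIdeal →
        p ∈ Module.support R ((iterCone R (List.ofFn x) M).homology (-n)) := by
  have : Nontrivial (M.homology (-n)) := by
    rwa [ModuleCat.isZero_iff_subsingleton, not_subsingleton_iff_nontrivial] at hn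
  obtain ⟨p, hp⟩ := Module.nonempty_support_of_nontrivial (R := R) (M := M.homology (-n))
  refine ⟨p, hp, fun k x hx ↦ support_homology_inter_zeroLocus_subset_iterCone _ M hfg _ ⟨hp, ?_⟩⟩
  rw [PrimeSpectrum.mem_zeroLocus, ← hx]
  rintro _ hy
  obtain ⟨i, rfl⟩ := List.mem_ofFn.mp hy
  exact Ideal.subset_span (Set.mem_range_self i)
end
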